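/- For any stochastic policy π of a discounted MDP with γ ∈ [0,1), the Bellman residual of the optimal operator at v_π is nonnegative and controls the global loss: T v_π - v_π ≥ 0 componentwise, and for any stochastic policy π' and probability distribution μ on states, μ·(v_{π'} - v_π) ≤ (1-γ)^{-1} ‖d_{μ,π'}/ν‖_∞ · ν·(T v_π - v_π) for every probability distribution ν such that ‖d_{μ,π'}/ν‖_∞ (the smallest C with d_{μ,π'}(s) ≤ Cν(s) for all s) is finite. -/

import Mathlib

open Matrix Filter Topology

section MDPdefs

variable {S A : Type*}

/-- `P` is a transition kernel: nonnegative and each row sums to one. -/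
def IsKernel [Fintype S] (P : S → A → S → ℝ) : Prop :=
  ∀ s a, (∀ s', 0 ≤ P s a s') ∧ ∑ s', P s a s' = 1

/-- A stochastic policy: a probability distribution over actions in each state. -/
def IsPolicy [Fintype A] (π : S → A → ℝ) : Prop :=
  ∀ s, (∀ a, 0 ≤ π s a) ∧ ∑ a, π s a = 1

/-- A probability distribution over states. -/
def IsDist [Fintype S] (μ : S → ℝ) : Prop :=
  (∀ s, 0 ≤ μ s) ∧ ∑ s, μ s = 1

/-- The reward vector `r_π(s) = ∑_a π(a|s) r(s,a)`. -/
def rPol [Fintype A] (r : S → A → ℝ) (π : S → A → ℝ) : S → ℝ :=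
  fun s => ∑ a, π s a * r s a

/-- The stochastic matrix `P_π(s,s') = ∑_a π(a|s) P(s'|s,a)`. -/
def PPol [Fintype A] (P : S → A → S → ℝ) (π : S → A → ℝ) : Matrix S S ℝ :=
  Matrix.of fun s s' => ∑ a, π s a * P s a s'

/-- The Bellman operator `T_π v = r_π + γ P_π v`. -/
noncomputable def bellman [Fintype S] [Fintype A] (P : S → A → S → ℝ) (r : S → A → ℝ)
    (γ : ℝ) (π : S → A → ℝ) (v : S → ℝ) : S → ℝ :=
  rPol r π + γ • (PPol P π *ᵥ v)

/-- The optimal Bellman operator `(Tv)(s) = max_a [r(s,a) + γ ∑_{s'} P(s'|s,a) v(s')]`. -/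
noncomputable def optBellman [Fintype S] [Fintype A] [Nonempty A] (P : S → A → S → ℝ)
    (r : S → A → ℝ) (γ : ℝ) (v : S → ℝ) : S → ℝ :=
  fun s => Finset.univ.sup' Finset.univ_nonempty fun a => r s a + γ * ∑ s', P s a s' * v s'

/-- The value function of policy `π`, `v_π = (I - γ P_π)⁻¹ r_π`, the unique solution of
`v = r_π + γ P_π v` when `0 ≤ γ < 1`. -/
noncomputable def valueFn [Fintype S] [Fintype A] [DecidableEq S] (P : S → A → S → ℝ)
    (r : S → A → ℝ) (γ : ℝ) (π : S → A → ℝ) : S → ℝ :=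
  ((1 : Matrix S S ℝ) - γ • PPol P π)⁻¹ *ᵥ rPol r π

/-- The γ-weighted occupancy measure `d_{μ,π} = (1-γ) μ (I - γ P_π)⁻¹` (a row vector). -/
noncomputable def occ [Fintype S] [Fintype A] [DecidableEq S] (P : S → A → S → ℝ)
    (γ : ℝ) (μ : S → ℝ) (π : S → A → ℝ) : S → ℝ :=
  (1 - γ) • (μ ᵥ* ((1 : Matrix S S ℝ) - γ • PPol P π)⁻¹)

/-- The stochastic mixture `(1-α)π + απ'`. -/
def mix (α : ℝ) (π π' : S → A → ℝ) : S → A → ℝ :=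
  fun s a => (1 - α) * π s a + α * π' s a

/-- The `ν`-greedy-complexity `E_ν(Π) = sup_{ρ∈Π} inf_{ρ'∈Π} d_{ν,ρ}·(T v_ρ - T_{ρ'} v_ρ)`. -/
noncomputable def greedyCplx [Fintype S] [Fintype A] [Nonempty A] [DecidableEq S]
    (P : S → A → S → ℝ) (r : S → A → ℝ) (γ : ℝ) (ν : S → ℝ)
    (Pol : Set (S → A → ℝ)) : ℝ :=
  ⨆ ρ : Pol, ⨅ ρ' : Pol,
    occ P γ ν (ρ : S → A → ℝ) ⬝ᵥ
      (optBellman P r γ (valueFn P r γ (ρ : S → A → ℝ)) -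
        bellman P r γ (ρ' : S → A → ℝ) (valueFn P r γ (ρ : S → A → ℝ)))

/-- `π` is an `ε`-local optimum of `J_ν` over `Pol`: for every `π' ∈ Pol`, the (one-sided)
limit of `(ν·v_{(1-α)π+απ'} - ν·v_π)/α` as `α → 0⁺` exists and is at most `ε`. -/
def IsLocalOpt [Fintype S] [Fintype A] [DecidableEq S]
    (P : S → A → S → ℝ) (r : S → A → ℝ) (γ : ℝ) (ν : S → ℝ)
    (Pol : Set (S → A → ℝ)) (π : S → A → ℝ) (ε : ℝ) : Prop :=
  ∀ π' ∈ Pol, ∃ L ≤ ε,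
    Tendsto (fun α : ℝ =>
        (ν ⬝ᵥ valueFn P r γ (mix α π π') - ν ⬝ᵥ valueFn P r γ π) / α)
      (𝓝[>] 0) (𝓝 L)

end MDPdefs

/-!
For a policy `π`, `P_π` is row stochastic, so `‖γ P_π‖_∞ ≤ γ < 1` and
`(I - γ P_π)⁻¹ = ∑ₖ γᵏ P_πᵏ` exists and is entrywise nonnegative. For every `v`,
`(I - γ P_{π'}) (v_{π'} - v) = T_{π'} v - v`, hence
`μ·(v_{π'} - v_π) = (1-γ)⁻¹ d_{μ,π'}·(T_{π'} v_π - v_π)`. As `d_{μ,π'} ≥ 0` and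
`T_{π'} ≤ T`, this is at most `(1-γ)⁻¹ d_{μ,π'}·(T v_π - v_π)`. Finally
`v_π = T_π v_π ≤ T v_π`, so the residual is nonnegative and `d_{μ,π'} ≤ C ν` applies.
-/

namespace Matrix

variable {n : Type*} [Fintype n] [DecidableEq n]

attribute [local instance] Matrix.linftyOpNormedRing Matrix.linftyOpNormedAlgebra

theorem linfty_opNorm_le_one_of_mem_rowStochastic {Q : Matrix n n ℝ}
    (hQ : Q ∈ rowStochastic ℝ n) : ‖Q‖ ≤ 1 := by
  rw [linfty_opNorm_def, NNReal.coe_le_one]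
  refine Finset.sup_le fun i _ => le_of_eq ?_
  rw [← NNReal.coe_inj, NNReal.coe_sum, NNReal.coe_one]
  simp_rw [coe_nnnorm, Real.norm_of_nonneg (nonneg_of_mem_rowStochastic hQ)]
  exact sum_row_of_mem_rowStochastic hQ i

theorem linfty_opNorm_smul_lt_one_of_mem_rowStochastic {Q : Matrix n n ℝ}
    (hQ : Q ∈ rowStochastic ℝ n) {γ : ℝ} (hγ0 : 0 ≤ γ) (hγ1 : γ < 1) : ‖γ • Q‖ < 1 :=
  calc ‖γ • Q‖ ≤ ‖γ‖ * ‖Q‖ := norm_smul_le γ Q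
    _ ≤ γ * 1 := by
      rw [Real.norm_of_nonneg hγ0]
      exact mul_le_mul_of_nonneg_left (linfty_opNorm_le_one_of_mem_rowStochastic hQ) hγ0
    _ < 1 := by linarith

theorem isUnit_one_sub_smul_of_mem_rowStochastic {Q : Matrix n n ℝ}
    (hQ : Q ∈ rowStochastic ℝ n) {γ : ℝ} (hγ0 : 0 ≤ γ) (hγ1 : γ < 1) :
    IsUnit (1 - γ • Q).det :=
  (isUnit_iff_isUnit_det _).mp <|
    isUnit_one_sub_of_norm_lt_one (linfty_opNorm_smul_lt_one_of_mem_rowStochastic hQ hγ0 hγ1)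

theorem inv_one_sub_smul_apply_nonneg_of_mem_rowStochastic {Q : Matrix n n ℝ}
    (hQ : Q ∈ rowStochastic ℝ n) {γ : ℝ} (hγ0 : 0 ≤ γ) (hγ1 : γ < 1) (i j : n) :
    0 ≤ (1 - γ • Q)⁻¹ i j := by
  have hnorm := linfty_opNorm_smul_lt_one_of_mem_rowStochastic hQ hγ0 hγ1
  have hsum : Summable fun k : ℕ => (γ • Q) ^ k := summable_geometric_of_norm_lt_one hnorm
  rw [nonsing_inv_eq_ringInverse, ← geom_series_eq_inverse _ hnorm]
  refine (Pi.hasSum.mp (Pi.hasSum.mp hsum.hasSum i) j).nonneg fun k => ?_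
  rw [smul_pow, smul_apply, smul_eq_mul]
  exact mul_nonneg (pow_nonneg hγ0 k) (nonneg_of_mem_rowStochastic (pow_mem hQ k))

end Matrix

section MDP

variable {S A : Type*} [Fintype S] [Fintype A] {P : S → A → S → ℝ} {r : S → A → ℝ} {γ : ℝ}

theorem bellman_apply (ρ : S → A → ℝ) (v : S → ℝ) (s : S) :
    bellman P r γ ρ v s = ∑ a, ρ s a * (r s a + γ * ∑ s', P s a s' * v s') := by
  simp only [bellman, rPol, PPol, Pi.add_apply, Pi.smul_apply, smul_eq_mul, mulVec, dotProduct,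
    of_apply, Finset.sum_mul, Finset.mul_sum, mul_add, Finset.sum_add_distrib]
  rw [Finset.sum_comm (f := fun s' a => γ * (ρ s a * P s a s' * v s'))]
  congr 1
  refine Finset.sum_congr rfl fun a _ => Finset.sum_congr rfl fun s' _ => by ring

theorem bellman_le_optBellman [Nonempty A] {ρ : S → A → ℝ} (hρ : IsPolicy ρ) (v : S → ℝ)
    (s : S) : bellman P r γ ρ v s ≤ optBellman P r γ v s :=
  calc bellman P r γ ρ v s
      ≤ ∑ a, ρ s a * optBellman P r γ v s := by
        rw [bellman_apply]
        exact Finset.sum_le_sum fun a _ => mul_le_mul_of_nonneg_left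
          (Finset.le_sup' (fun a => r s a + γ * ∑ s', P s a s' * v s') (Finset.mem_univ a))
          ((hρ s).1 a)
    _ = optBellman P r γ v s := by rw [← Finset.sum_mul, (hρ s).2, one_mul]

variable [DecidableEq S]

theorem PPol_mem_rowStochastic (hP : IsKernel P) {π : S → A → ℝ} (hπ : IsPolicy π) :
    PPol P π ∈ rowStochastic ℝ S := by
  refine mem_rowStochastic_iff_sum.mpr
    ⟨fun s s' => Finset.sum_nonneg fun a _ => mul_nonneg ((hπ s).1 a) ((hP s a).1 s'), fun s => ?_⟩
  simp only [PPol, of_apply]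
  rw [Finset.sum_comm]
  simp only [← Finset.mul_sum, (hP s _).2, mul_one, (hπ s).2]

theorem one_sub_smul_PPol_mulVec_valueFn (hP : IsKernel P) (hγ0 : 0 ≤ γ) (hγ1 : γ < 1)
    {π : S → A → ℝ} (hπ : IsPolicy π) :
    (1 - γ • PPol P π) *ᵥ valueFn P r γ π = rPol r π := by
  rw [valueFn, mulVec_mulVec, mul_nonsing_inv _
    (isUnit_one_sub_smul_of_mem_rowStochastic (PPol_mem_rowStochastic hP hπ) hγ0 hγ1),
    one_mulVec]

theorem bellman_valueFn (hP : IsKernel P) (hγ0 : 0 ≤ γ) (hγ1 : γ < 1)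
    {π : S → A → ℝ} (hπ : IsPolicy π) :
    bellman P r γ π (valueFn P r γ π) = valueFn P r γ π := by
  have h := one_sub_smul_PPol_mulVec_valueFn (r := r) hP hγ0 hγ1 hπ
  rw [sub_mulVec, one_mulVec, smul_mulVec, sub_eq_iff_eq_add] at h
  exact h.symm

theorem valueFn_sub_eq_inv_mulVec_bellman_sub (hP : IsKernel P) (hγ0 : 0 ≤ γ) (hγ1 : γ < 1)
    {π : S → A → ℝ} (hπ : IsPolicy π) (v : S → ℝ) :
    valueFn P r γ π - v = (1 - γ • PPol P π)⁻¹ *ᵥ (bellman P r γ π v - v) := by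
  have hM : (1 - γ • PPol P π) *ᵥ (valueFn P r γ π - v) = bellman P r γ π v - v := by
    rw [mulVec_sub, one_sub_smul_PPol_mulVec_valueFn hP hγ0 hγ1 hπ, sub_mulVec, one_mulVec,
      smul_mulVec, bellman]
    abel
  rw [← hM, mulVec_mulVec, nonsing_inv_mul _
    (isUnit_one_sub_smul_of_mem_rowStochastic (PPol_mem_rowStochastic hP hπ) hγ0 hγ1),
    one_mulVec]

theorem dotProduct_inv_one_sub_smul_PPol_mulVec (hγ1 : γ ≠ 1) (μ : S → ℝ) (π : S → A → ℝ)
    (w : S → ℝ) :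
    μ ⬝ᵥ ((1 - γ • PPol P π)⁻¹ *ᵥ w) = (1 - γ)⁻¹ * (occ P γ μ π ⬝ᵥ w) := by
  rw [dotProduct_mulVec, occ, smul_dotProduct, smul_eq_mul,
    inv_mul_cancel_left₀ (sub_ne_zero.mpr hγ1.symm)]

theorem occ_nonneg (hP : IsKernel P) (hγ0 : 0 ≤ γ) (hγ1 : γ < 1) {π : S → A → ℝ}
    (hπ : IsPolicy π) {μ : S → ℝ} (hμ : 0 ≤ μ) : 0 ≤ occ P γ μ π :=
  smul_nonneg (sub_nonneg.mpr hγ1.le) fun s => Finset.sum_nonneg fun t _ => mul_nonneg (hμ t)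
    (inv_one_sub_smul_apply_nonneg_of_mem_rowStochastic (PPol_mem_rowStochastic hP hπ) hγ0 hγ1 t s)

end MDP

theorem stmt_16_general {S A : Type*} [Fintype S] [Fintype A] [Nonempty A] [DecidableEq S]
    (P : S → A → S → ℝ) (hP : IsKernel P) (r : S → A → ℝ) (γ : ℝ)
    (hγ0 : 0 ≤ γ) (hγ1 : γ < 1)
    (π : S → A → ℝ) (hπ : IsPolicy π) :
    (∀ s, valueFn P r γ π s ≤ optBellman P r γ (valueFn P r γ π) s)
    ∧ ∀ π' : S → A → ℝ, IsPolicy π' → ∀ μ ν : S → ℝ, IsDist μ → IsDist ν →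
        ∀ C : ℝ, IsLeast {c : ℝ | ∀ s, occ P γ μ π' s ≤ c * ν s} C →
          μ ⬝ᵥ (valueFn P r γ π' - valueFn P r γ π)
            ≤ (1 - γ)⁻¹ * C *
                (ν ⬝ᵥ (optBellman P r γ (valueFn P r γ π) - valueFn P r γ π)) := by
  set v := valueFn P r γ π
  have hv_le : v ≤ optBellman P r γ v := fun s =>
    (congrFun (bellman_valueFn hP hγ0 hγ1 hπ) s).symm.trans_le (bellman_le_optBellman hπ v s)
  refine ⟨hv_le, fun π' hπ' μ ν hμ _ C hC => ?_⟩
  calc μ ⬝ᵥ (valueFn P r γ π' - v)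
      = (1 - γ)⁻¹ * (occ P γ μ π' ⬝ᵥ (bellman P r γ π' v - v)) := by
        rw [valueFn_sub_eq_inv_mulVec_bellman_sub hP hγ0 hγ1 hπ',
          dotProduct_inv_one_sub_smul_PPol_mulVec hγ1.ne]
    _ ≤ (1 - γ)⁻¹ * (occ P γ μ π' ⬝ᵥ (optBellman P r γ v - v)) := by
        gcongr
        exact dotProduct_le_dotProduct_of_nonneg_left
          (sub_le_sub_right (fun s => bellman_le_optBellman hπ' v s) v)
          (occ_nonneg hP hγ0 hγ1 hπ' hμ.1)
    _ ≤ (1 - γ)⁻¹ * ((C • ν) ⬝ᵥ (optBellman P r γ v - v)) := by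
        gcongr
        exact dotProduct_le_dotProduct_of_nonneg_right hC.1 (sub_nonneg.mpr hv_le)
    _ = (1 - γ)⁻¹ * C * (ν ⬝ᵥ (optBellman P r γ v - v)) := by
        rw [smul_dotProduct, smul_eq_mul, mul_assoc]

/-- `T v_π - v_π ≥ 0` componentwise, and for any policy `π'`, distributions
`μ, ν` and `C = ‖d_{μ,π'}/ν‖_∞`,
`μ·(v_{π'} - v_π) ≤ (1-γ)⁻¹ C ν·(Tv_π - v_π)`. -/
theorem stmt_16 {S A : Type*} [Fintype S] [Fintype A] [Nonempty S] [Nonempty A] [DecidableEq S]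
    (P : S → A → S → ℝ) (hP : IsKernel P) (r : S → A → ℝ) (γ : ℝ)
    (hγ0 : 0 ≤ γ) (hγ1 : γ < 1)
    (π : S → A → ℝ) (hπ : IsPolicy π) :
    (∀ s, valueFn P r γ π s ≤ optBellman P r γ (valueFn P r γ π) s)
    ∧ ∀ π' : S → A → ℝ, IsPolicy π' → ∀ μ ν : S → ℝ, IsDist μ → IsDist ν →
        ∀ C : ℝ, IsLeast {c : ℝ | ∀ s, occ P γ μ π' s ≤ c * ν s} C →
          μ ⬝ᵥ (valueFn P r γ π' - valueFn P r γ π)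
            ≤ (1 - γ)⁻¹ * C *
                (ν ⬝ᵥ (optBellman P r γ (valueFn P r γ π) - valueFn P r γ π)) :=
  stmt_16_general P hP r γ hγ0 hγ1 π hπ
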